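/- Pointwise limit of the Bailey WZ summand: With F(n,k) as in the WZ-pair for Bailey's theorem (and the same nonvanishing hypotheses), for every fixed nonnegative integer k one has lim_{n→∞} F(n,k) = δ_{k,0}, i.e. the limit is 1 if k = 0 and 0 otherwise. -/

import Mathlib

/-!
Euler's limit formula gives `Γ(z + n + 1) ~ n! n^z`, so the Gamma quotient in `F(n,k)` tends to `1`:
its two numerator arguments have the same sum as its two denominator arguments. For `k ≥ 1` the
factor `1 / (b + 2n)_k` tends to `0`, a Pochhammer symbol being a nonconstant polynomial.
-/

open Complex Finset Filter Topology

/-- The Pochhammer symbol `(x)_k = x (x+1) ⋯ (x+k-1)`. -/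
noncomputable def poch (x : ℂ) (k : ℕ) : ℂ := (ascPochhammer ℂ k).eval x

/-- The WZ summand for Bailey's theorem:
`F(n,k) = (a)_k (1-a)_k (1/2)^k / ((b+2n)_k k!) ·
  Γ((a+b)/2+n) Γ((1-a+b)/2+n) / (Γ(b/2+n) Γ((1+b)/2+n))`. -/
noncomputable def baileyF (a b : ℂ) (n k : ℕ) : ℂ :=
  poch a k * poch (1 - a) k * (1 / 2 : ℂ) ^ k /
    (poch (b + 2 * n) k * (Nat.factorial k : ℂ)) *
  (Gamma ((a + b) / 2 + n) * Gamma ((1 - a + b) / 2 + n) /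
    (Gamma (b / 2 + n) * Gamma ((1 + b) / 2 + n)))

/-- `G(n,k) = F(n,k) · (-2k/(b+2n+k))`. -/
noncomputable def baileyG (a b : ℂ) (n k : ℕ) : ℂ :=
  baileyF a b n k * (-2 * k / (b + 2 * n + k))

open Bornology

lemma poch_eq_prod_range (x : ℂ) (k : ℕ) : poch x k = ∏ j ∈ Finset.range k, (x + j) := by
  induction k with
  | zero => simp [poch]
  | succ k ih => rw [Finset.prod_range_succ, ← ih, poch, poch, ascPochhammer_succ_eval]

lemma tendsto_poch_cobounded {α : Type*} {l : Filter α} {w : α → ℂ} {k : ℕ} (hk : k ≠ 0)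
    (hw : Tendsto w l (cobounded ℂ)) : Tendsto (fun x => poch (w x) k) l (cobounded ℂ) := by
  have hdeg : 0 < (ascPochhammer ℂ k).degree := by
    rw [Polynomial.degree_eq_natDegree (monic_ascPochhammer ℂ k).ne_zero, ascPochhammer_natDegree]
    exact_mod_cast Nat.pos_of_ne_zero hk
  rw [← tendsto_norm_atTop_iff_cobounded] at hw ⊢
  exact Polynomial.tendsto_norm_atTop _ hdeg hw

lemma tendsto_const_add_two_mul_natCast_cobounded (b : ℂ) :
    Tendsto (fun n : ℕ => b + 2 * (n : ℂ)) atTop (cobounded ℂ) :=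
  (tendsto_const_add_cobounded b).comp <|
    (tendsto_mul_left_cobounded two_ne_zero).comp tendsto_natCast_atTop_cobounded

lemma Complex.Gamma_add_nat_eq_mul_poch {z : ℂ} (hz : Gamma z ≠ 0) (n : ℕ) :
    Gamma (z + n) = Gamma z * poch z n := by
  rw [poch, ← Gamma_add_nat_div_Gamma_eq z fun m hm => hz ((Gamma_eq_zero_iff z).2 ⟨m, hm⟩),
    mul_div_cancel₀ _ hz]

lemma Complex.Gamma_add_nat_add_one_div_eq_div_GammaSeq {z : ℂ} (hz : Gamma z ≠ 0) (n : ℕ) :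
    Gamma (z + (n + 1 : ℕ)) / (n.factorial * (n : ℂ) ^ z) = Gamma z / GammaSeq z n := by
  rw [Gamma_add_nat_eq_mul_poch hz, poch_eq_prod_range, GammaSeq, div_div_eq_mul_div,
    mul_comm ((n : ℂ) ^ z)]

lemma Complex.tendsto_Gamma_add_nat_add_one_div {z : ℂ} (hz : Gamma z ≠ 0) :
    Tendsto (fun n : ℕ => Gamma (z + (n + 1 : ℕ)) / (n.factorial * (n : ℂ) ^ z)) atTop (𝓝 1) := by
  simp_rw [Gamma_add_nat_add_one_div_eq_div_GammaSeq hz]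
  rw [← div_self hz]
  exact tendsto_const_nhds.div (GammaSeq_tendsto_Gamma z) hz

lemma Complex.tendsto_Gamma_mul_Gamma_div_Gamma_mul_Gamma {x y u v : ℂ} (hsum : x + y = u + v)
    (hx : Gamma x ≠ 0) (hy : Gamma y ≠ 0) (hu : Gamma u ≠ 0) (hv : Gamma v ≠ 0) :
    Tendsto (fun n : ℕ => Gamma (x + n) * Gamma (y + n) / (Gamma (u + n) * Gamma (v + n)))
      atTop (𝓝 1) := by
  rw [← tendsto_add_atTop_iff_nat 1]
  have hlim :=
    ((tendsto_Gamma_add_nat_add_one_div hx).mul (tendsto_Gamma_add_nat_add_one_div hy)).div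
      ((tendsto_Gamma_add_nat_add_one_div hu).mul (tendsto_Gamma_add_nat_add_one_div hv))
      (by norm_num)
  rw [mul_one, div_one] at hlim
  refine hlim.congr' ?_
  filter_upwards [eventually_ne_atTop 0] with n hn
  have hn0 : (n : ℂ) ≠ 0 := Nat.cast_ne_zero.2 hn
  have hscale : (n.factorial * (n : ℂ) ^ x) * (n.factorial * (n : ℂ) ^ y) =
      (n.factorial * (n : ℂ) ^ u) * (n.factorial * (n : ℂ) ^ v) := by
    rw [mul_mul_mul_comm, ← cpow_add _ _ hn0, hsum, cpow_add _ _ hn0, mul_mul_mul_comm]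
  have hne : (n.factorial * (n : ℂ) ^ u) * (n.factorial * (n : ℂ) ^ v) ≠ 0 := by
    have : (n.factorial : ℂ) ≠ 0 := Nat.cast_ne_zero.2 n.factorial_ne_zero
    simp [this, hn0]
  rw [Pi.div_apply, div_mul_div_comm, div_mul_div_comm, hscale, div_div_div_cancel_right₀ hne]

theorem bailey_WZ_summand_limit_general (a b : ℂ)
    (h2 : ∀ n : ℕ, Gamma ((a + b) / 2 + (n : ℂ)) ≠ 0)
    (h3 : ∀ n : ℕ, Gamma ((1 - a + b) / 2 + (n : ℂ)) ≠ 0)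
    (h4 : ∀ n : ℕ, Gamma (b / 2 + (n : ℂ)) ≠ 0)
    (h5 : ∀ n : ℕ, Gamma ((1 + b) / 2 + (n : ℂ)) ≠ 0) :
    ∀ k : ℕ,
      Tendsto (fun n : ℕ => baileyF a b n k) atTop
        (𝓝 (if k = 0 then 1 else 0)) := by
  intro k
  have hratio : Tendsto (fun n : ℕ => Gamma ((a + b) / 2 + n) * Gamma ((1 - a + b) / 2 + n) /
      (Gamma (b / 2 + n) * Gamma ((1 + b) / 2 + n))) atTop (𝓝 1) :=
    tendsto_Gamma_mul_Gamma_div_Gamma_mul_Gamma (by ring) (by simpa using h2 0)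
      (by simpa using h3 0) (by simpa using h4 0) (by simpa using h5 0)
  rcases eq_or_ne k 0 with rfl | hk
  · simpa [baileyF, poch] using hratio
  have hpoch : Tendsto (fun n : ℕ => (poch (b + 2 * n) k)⁻¹) atTop (𝓝 0) :=
    tendsto_inv₀_cobounded.comp <|
      tendsto_poch_cobounded hk (tendsto_const_add_two_mul_natCast_cobounded b)
  have hlim := ((tendsto_const_nhds (x := poch a k * poch (1 - a) k * (1 / 2 : ℂ) ^ k /
    k.factorial)).mul hpoch).mul hratio
  rw [mul_zero, zero_mul] at hlim
  rw [if_neg hk]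
  refine hlim.congr fun n => ?_
  simp only [baileyF]
  ring

/-- Pointwise limit of the Bailey WZ summand: for each fixed `k`,
`F(n,k) → δ_{k,0}` as `n → ∞`. -/
theorem bailey_WZ_summand_limit (a b : ℂ)
    (h1 : ∀ n m : ℕ, b + 2 * (n : ℂ) ≠ -(m : ℂ))
    (h2 : ∀ n : ℕ, Gamma ((a + b) / 2 + (n : ℂ)) ≠ 0)
    (h3 : ∀ n : ℕ, Gamma ((1 - a + b) / 2 + (n : ℂ)) ≠ 0)
    (h4 : ∀ n : ℕ, Gamma (b / 2 + (n : ℂ)) ≠ 0)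
    (h5 : ∀ n : ℕ, Gamma ((1 + b) / 2 + (n : ℂ)) ≠ 0) :
    ∀ k : ℕ,
      Tendsto (fun n : ℕ => baileyF a b n k) atTop
        (𝓝 (if k = 0 then 1 else 0)) :=
  bailey_WZ_summand_limit_general a b h2 h3 h4 h5
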